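/- Fix K ∈ ℝⁿ. There exist constants m₂ > 0, μ₂ ∈ (|K|/√(1+|K|²), 1) and c > 0 such that for all ξ ∈ ℝⁿ with |ξ| ≤ μ₂ and |K·ξ| ≤ m₂, both roots A_±(K,ξ) of (1+|K|²)X² − 2(1+iK·ξ)X + (1−|ξ|²) (with the square-root branch of nonnegative real part) satisfy Re A_±(K,ξ) > 1/(2(1+|K|²)). -/

import Mathlib

/-! Write `s = x + iy` for the square root of the discriminant, so that `A_± = (1 + iK·ξ ± s)/(1+|K|²)`
and it suffices to show `|x| < 1/2`. On `|ξ| ≤ μ₂` the real part `x² - y²` of the discriminant is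
at most `1 - (1+|K|²)(1-|ξ|²) ≤ 1/16`, while its imaginary part `2xy = 2K·ξ` is small. If `|x| ≥ 1/2`,
the first bound forces `y² ≥ 3/16`, and then `|xy|` cannot be small. -/

open Complex
open scoped InnerProductSpace

theorem Complex.abs_re_lt_of_sq {s : ℂ} {r : ℝ} (hr : 0 ≤ r) (hre : (s ^ 2).re ≤ r ^ 2 / 4)
    (him : |(s ^ 2).im| < r ^ 2) : |s.re| < r := by
  rw [sq, mul_re] at hre
  rw [sq, mul_im, abs_lt] at him
  have him2 : (2 * (s.re * s.im)) ^ 2 < (r ^ 2) ^ 2 := sq_lt_sq' (by linarith) (by linarith)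
  by_contra! h
  have hx : r ^ 2 ≤ s.re ^ 2 := by rw [← sq_abs s.re]; gcongr
  have hy : 3 * r ^ 2 / 4 ≤ s.im ^ 2 := by nlinarith
  nlinarith [mul_le_mul hx hy (by positivity) (sq_nonneg s.re)]

theorem Complex.div_ofReal_re_gt {z : ℂ} {d : ℝ} (hd : 0 < d) (hz : 1 / 2 < z.re) :
    1 / (2 * d) < (z / (d : ℂ)).re := by
  rw [div_ofReal_re, div_lt_div_iff₀ (by positivity) hd]
  nlinarith

theorem re_discriminant (k R t : ℝ) :
    ((1 + I * (k : ℂ)) ^ 2 - (1 + (R : ℂ) ^ 2) * (1 - (t : ℂ) ^ 2)).re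
      = 1 - k ^ 2 - (1 + R ^ 2) * (1 - t ^ 2) := by
  simp [sq]

theorem im_discriminant (k R t : ℝ) :
    ((1 + I * (k : ℂ)) ^ 2 - (1 + (R : ℂ) ^ 2) * (1 - (t : ℂ) ^ 2)).im = 2 * k := by
  simp [sq, mul_comm, ← two_mul]

theorem exists_radius_one_sub_mul_le {R ε : ℝ} (hR : 0 ≤ R) (hε₀ : 0 < ε) (hε₁ : ε < 1) :
    ∃ μ : ℝ, R / Real.sqrt (1 + R ^ 2) < μ ∧ μ < 1 ∧
      ∀ t : ℝ, 0 ≤ t → t ≤ μ → 1 - (1 + R ^ 2) * (1 - t ^ 2) ≤ ε := by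
  have hd : 0 < 1 + R ^ 2 := by positivity
  have hμ : Real.sqrt ((R ^ 2 + ε) / (1 + R ^ 2)) ^ 2 = (R ^ 2 + ε) / (1 + R ^ 2) :=
    Real.sq_sqrt (by positivity)
  refine ⟨Real.sqrt ((R ^ 2 + ε) / (1 + R ^ 2)), ?_, ?_, fun t ht htμ => ?_⟩
  · have hsqrt : R / Real.sqrt (1 + R ^ 2) = Real.sqrt (R ^ 2 / (1 + R ^ 2)) := by
      rw [Real.sqrt_div (sq_nonneg R), Real.sqrt_sq hR]
    rw [hsqrt]
    gcongr
    linarith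
  · rw [Real.sqrt_lt' one_pos, one_pow, div_lt_one hd]
    linarith
  · have ht2 : t ^ 2 * (1 + R ^ 2) ≤ R ^ 2 + ε := by
      rw [← le_div_iff₀ hd, ← hμ]
      gcongr
    nlinarith

theorem stmt_4 (n : ℕ) (K : EuclideanSpace ℝ (Fin n)) :
    ∃ m₂ : ℝ, 0 < m₂ ∧ ∃ μ₂ : ℝ,
      ‖K‖ / Real.sqrt (1 + ‖K‖ ^ 2) < μ₂ ∧ μ₂ < 1 ∧ ∃ c : ℝ, 0 < c ∧
      ∀ ξ : EuclideanSpace ℝ (Fin n), ‖ξ‖ ≤ μ₂ → |(⟪K, ξ⟫_ℝ : ℝ)| ≤ m₂ →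
        ∀ s : ℂ,
          s ^ 2 = (1 + Complex.I * (⟪K, ξ⟫_ℝ : ℂ)) ^ 2
              - (1 + (‖K‖ : ℂ) ^ 2) * (1 - (‖ξ‖ : ℂ) ^ 2) →
          0 ≤ s.re →
          1 / (2 * (1 + ‖K‖ ^ 2)) <
              (((1 + Complex.I * (⟪K, ξ⟫_ℝ : ℂ) + s) / (1 + (‖K‖ : ℂ) ^ 2)).re) ∧
          1 / (2 * (1 + ‖K‖ ^ 2)) <
              (((1 + Complex.I * (⟪K, ξ⟫_ℝ : ℂ) - s) / (1 + (‖K‖ : ℂ) ^ 2)).re) := by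
  obtain ⟨μ, hμK, hμ1, hμ⟩ :=
    exists_radius_one_sub_mul_le (norm_nonneg K) (ε := 1 / 16) (by norm_num) (by norm_num)
  refine ⟨1 / 16, by norm_num, μ, hμK, hμ1, 1, one_pos, fun ξ hξ hKξ s hs _ => ?_⟩
  have hsre : |s.re| < 1 / 2 := by
    refine Complex.abs_re_lt_of_sq (by norm_num) ?_ ?_
    · rw [hs, re_discriminant]
      nlinarith [hμ ‖ξ‖ (norm_nonneg ξ) hξ, sq_nonneg (⟪K, ξ⟫_ℝ : ℝ)]
    · rw [hs, im_discriminant, abs_mul, abs_two]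
      linarith
  have hd : (1 + (‖K‖ : ℂ) ^ 2) = ((1 + ‖K‖ ^ 2 : ℝ) : ℂ) := by push_cast; rfl
  rw [hd]
  obtain ⟨hlo, hhi⟩ := abs_lt.mp hsre
  constructor <;> refine Complex.div_ofReal_re_gt (by positivity) ?_ <;>
    simp only [add_re, sub_re, one_re, I_mul_re, ofReal_im, neg_zero, add_zero] <;> linarith
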